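/- Let ρ₁, ρ₂, k₁, k₂ be positive real constants with k₁/ρ₁ ≠ k₂/ρ₂, and for each positive integer n let μ_{1,n} and μ_{2,n} be defined by the different-speed formulas. Then, as n → ∞, μ_{1,n} − ( nπ·√(k₁/ρ₁) + (k₁/ρ₂)·√(k₁/ρ₁)/(2(k₁/ρ₁ − k₂/ρ₂)πn) ) = O(n^{−3}) and μ_{2,n} − ( nπ·√(k₂/ρ₂) − (k₁/ρ₂)·√(k₂/ρ₂)/(2(k₁/ρ₁ − k₂/ρ₂)πn) ) = O(n^{−3}). -/

import Mathlib

open Filter Asymptotics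

/-- Different-speed eigenfrequency, first branch. -/
noncomputable def mu1df (ρ₁ ρ₂ k₁ k₂ : ℝ) (n : ℕ) : ℝ :=
  Real.sqrt (((k₁ / ρ₁ + k₂ / ρ₂) * ((n : ℝ) * Real.pi) ^ 2 + k₁ / ρ₂) / 2
    + ((k₁ / ρ₁ - k₂ / ρ₂) / 2) * Real.sqrt (((n : ℝ) * Real.pi) ^ 4
      + (2 * (k₁ / ρ₁ + k₂ / ρ₂) * (k₁ / ρ₂) * ((n : ℝ) * Real.pi) ^ 2 + (k₁ / ρ₂) ^ 2)
        / (k₁ / ρ₁ - k₂ / ρ₂) ^ 2))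

/-- Different-speed eigenfrequency, second branch. -/
noncomputable def mu2df (ρ₁ ρ₂ k₁ k₂ : ℝ) (n : ℕ) : ℝ :=
  Real.sqrt (((k₁ / ρ₁ + k₂ / ρ₂) * ((n : ℝ) * Real.pi) ^ 2 + k₁ / ρ₂) / 2
    - ((k₁ / ρ₁ - k₂ / ρ₂) / 2) * Real.sqrt (((n : ℝ) * Real.pi) ^ 4
      + (2 * (k₁ / ρ₁ + k₂ / ρ₂) * (k₁ / ρ₂) * ((n : ℝ) * Real.pi) ^ 2 + (k₁ / ρ₂) ^ 2)
        / (k₁ / ρ₁ - k₂ / ρ₂) ^ 2))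

lemma inner_bound (u v x : ℝ) (hu : 0 ≤ u) (hv : 0 ≤ v) (hx : 0 < x) :
    |Real.sqrt (x^4 + u*x^2 + v) - (x^2 + u/2)| * (2*x^2) ≤ |v - u^2/4| := by
  have hg : 0 ≤ x^4 + u*x^2 + v := by positivity
  set s := Real.sqrt (x^4 + u*x^2 + v) with hs_def
  have h1 : s^2 = x^4 + u*x^2 + v := Real.sq_sqrt hg
  have hs : x^2 ≤ s := by
    calc x^2 = Real.sqrt ((x^2)^2) := (Real.sqrt_sq (by positivity)).symm
      _ ≤ s := Real.sqrt_le_sqrt (by nlinarith only [hv, mul_nonneg hu (sq_nonneg x)])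
  have hA : 0 < x^2 + u/2 := by positivity
  have key : (s - (x^2+u/2)) * (s + (x^2+u/2)) = v - u^2/4 := by linear_combination h1
  have h2 : |s - (x^2+u/2)| * (2*x^2) ≤ |s - (x^2+u/2)| * (s + (x^2+u/2)) :=
    mul_le_mul_of_nonneg_left (by linarith only [hs, hu]) (abs_nonneg _)
  have h3 : |s - (x^2+u/2)| * (s + (x^2+u/2)) = |v - u^2/4| := by
    rw [← abs_of_pos (show 0 < s + (x^2+u/2) by linarith only [hs, hA, sq_nonneg x]), ← abs_mul, key]
  linarith

lemma sqrt_close {g f K : ℝ} (hf : 0 < f) (h : |g - f^2| ≤ K) (hK : K < f^2) :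
    |Real.sqrt g - f| * f ≤ K := by
  have hg : 0 ≤ g := by
    rcases abs_le.mp h with ⟨h1, _⟩; linarith only [h1, hK]
  have hs : 0 ≤ Real.sqrt g := Real.sqrt_nonneg g
  have h1 : Real.sqrt g ^ 2 = g := Real.sq_sqrt hg
  have key : (Real.sqrt g - f) * (Real.sqrt g + f) = g - f^2 := by linear_combination h1
  calc |Real.sqrt g - f| * f ≤ |Real.sqrt g - f| * (Real.sqrt g + f) :=
        mul_le_mul_of_nonneg_left (by linarith) (abs_nonneg _)
    _ = |g - f^2| := by
        rw [← abs_of_pos (show 0 < Real.sqrt g + f by linarith), ← abs_mul, key]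
    _ ≤ K := h

set_option maxHeartbeats 2000000 in
lemma branch_asymp (a b c : ℝ) (ha : 0 < a) (hb : 0 < b) (hc : 0 < c) (hab : a ≠ b) :
    (fun n : ℕ => Real.sqrt (((a + b) * ((n : ℝ) * Real.pi) ^ 2 + c) / 2
        + ((a - b) / 2) * Real.sqrt (((n : ℝ) * Real.pi) ^ 4
          + (2 * (a + b) * c * ((n : ℝ) * Real.pi) ^ 2 + c ^ 2) / (a - b) ^ 2))
      - ((n : ℝ) * Real.pi * Real.sqrt a
          + c * Real.sqrt a / (2 * (a - b) * Real.pi * (n : ℝ))))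
      =O[atTop] (fun n : ℕ => (((n : ℝ)) ^ 3)⁻¹) := by
  have hd : a - b ≠ 0 := sub_ne_zero.mpr hab
  have hd2 : (0:ℝ) < (a-b)^2 := by positivity
  have hπ : (3:ℝ) < Real.pi := Real.pi_gt_three
  have hπ0 : (0:ℝ) < Real.pi := by linarith
  have habs : (0:ℝ) < |a - b| := abs_pos.mpr hd
  set sa := Real.sqrt a with hsa_def
  have hsa2 : sa^2 = a := Real.sq_sqrt ha.le
  have hsa0 : 0 < sa := Real.sqrt_pos.mpr ha
  set K₃ : ℝ := |(a-b)/2| * |c^2/(a-b)^2 - (2*(a+b)*c/(a-b)^2)^2/4| / 2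
      + a*c^2/(4*(a-b)^2) with hK₃def
  have hK₃0 : 0 < K₃ := by positivity
  set B : ℝ := c*sa/(2*|a - b| * Real.pi) with hBdef
  have hB0 : 0 < B := by positivity
  rw [isBigO_iff]
  refine ⟨2*K₃/sa, ?_⟩
  have hev := (tendsto_natCast_atTop_atTop (R := ℝ)).eventually_ge_atTop
      (4*K₃/a + 4*B/sa + 1)
  filter_upwards [hev] with n hn
  have hKB : 0 ≤ 4*K₃/a + 4*B/sa := by positivity
  have hn1 : (1:ℝ) ≤ (n:ℝ) := by linarith only [hn, hKB]
  have hn0 : (0:ℝ) < (n:ℝ) := by linarith only [hn1]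
  have hx0 : (0:ℝ) < (n:ℝ)*Real.pi := by positivity
  have hnsa : 4*B ≤ (n:ℝ)*sa := by
    have h4 : 4*B/sa ≤ (n:ℝ) := by
      have h0 : 0 ≤ 4*K₃/a := by positivity
      linarith only [hn, h0]
    rw [div_le_iff₀ hsa0] at h4; linarith only [h4]
  have hnKa : 4*K₃ ≤ (n:ℝ)*a := by
    have h4 : 4*K₃/a ≤ (n:ℝ) := by
      have h0 : 0 ≤ 4*B/sa := by positivity
      linarith only [hn, h0]
    rw [div_le_iff₀ ha] at h4; linarith only [h4]
  set S := Real.sqrt (((n:ℝ)*Real.pi)^4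
      + (2*(a+b)*c*((n:ℝ)*Real.pi)^2 + c^2)/(a-b)^2) with hSdef
  set A := ((n:ℝ)*Real.pi)^2 + (2*(a+b)*c/(a-b)^2)/2 with hAdef
  have hin : |S - A| * (2*((n:ℝ)*Real.pi)^2)
      ≤ |c^2/(a-b)^2 - (2*(a+b)*c/(a-b)^2)^2/4| := by
    rw [hSdef, hAdef, show ((n:ℝ)*Real.pi)^4 + (2*(a+b)*c*((n:ℝ)*Real.pi)^2 + c^2)/(a-b)^2
        = ((n:ℝ)*Real.pi)^4 + (2*(a+b)*c/(a-b)^2)*((n:ℝ)*Real.pi)^2 + c^2/(a-b)^2 by ring]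
    exact inner_bound _ _ _ (by positivity) (by positivity) hx0
  set f : ℝ := (n:ℝ)*Real.pi*sa + c*sa/(2*(a-b)*Real.pi*(n:ℝ)) with hfdef
  set g : ℝ := ((a+b)*((n:ℝ)*Real.pi)^2 + c)/2 + (a-b)/2 * S with hgdef
  clear_value g f S A B K₃ sa
  -- f squared
  have hf2 : f^2 = a*((n:ℝ)*Real.pi)^2 + a*c/(a-b)
      + a*c^2/(4*(a-b)^2*((n:ℝ)*Real.pi)^2) := by
    have hd' : sa^2 - b ≠ 0 := by rw [hsa2]; exact hd
    rw [hfdef, ← hsa2]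
    field_simp
    ring
  -- the key identity
  have hid : g - f^2 = (a-b)/2 * (S - A) - a*c^2/(4*(a-b)^2*((n:ℝ)*Real.pi)^2) := by
    rw [hgdef, hf2, hAdef]
    field_simp
    ring
  -- bound on |g - f^2|
  have hSA : |S - A| ≤ |c^2/(a-b)^2 - (2*(a+b)*c/(a-b)^2)^2/4| / (2*((n:ℝ)*Real.pi)^2) := by
    rw [le_div_iff₀ (by positivity)]; exact hin
  have hE : |g - f^2| ≤ K₃/((n:ℝ)*Real.pi)^2 := by
    rw [hid]
    calc |(a-b)/2 * (S - A) - a*c^2/(4*(a-b)^2*((n:ℝ)*Real.pi)^2)|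
        ≤ |(a-b)/2 * (S - A)| + |a*c^2/(4*(a-b)^2*((n:ℝ)*Real.pi)^2)| := abs_sub _ _
      _ = |(a-b)/2| * |S - A| + a*c^2/(4*(a-b)^2*((n:ℝ)*Real.pi)^2) := by
          rw [abs_mul, abs_of_pos (show (0:ℝ) < a*c^2/(4*(a-b)^2*((n:ℝ)*Real.pi)^2) by positivity)]
      _ ≤ |(a-b)/2| * (|c^2/(a-b)^2 - (2*(a+b)*c/(a-b)^2)^2/4| / (2*((n:ℝ)*Real.pi)^2))
            + a*c^2/(4*(a-b)^2*((n:ℝ)*Real.pi)^2) := by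
          gcongr
      _ = K₃/((n:ℝ)*Real.pi)^2 := by
          rw [hK₃def]; field_simp
  -- lower bound for f
  have ht : |c*sa/(2*(a-b)*Real.pi*(n:ℝ))| ≤ B := by
    rw [hBdef, abs_div, abs_of_pos (show (0:ℝ) < c*sa by positivity)]
    rw [show |2*(a-b)*Real.pi*(n:ℝ)| = 2*|a - b| * Real.pi*(n:ℝ) by
      rw [abs_mul, abs_mul, abs_mul, abs_of_pos hπ0, abs_of_pos hn0, abs_of_pos (show (0:ℝ) < 2 by norm_num)]]
    have hden : 2*|a - b| * Real.pi ≤ 2*|a - b| * Real.pi*(n:ℝ) := by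
      linarith only [mul_nonneg (mul_nonneg (by linarith only [habs] : (0:ℝ) ≤ 2*|a - b|) hπ0.le)
        (by linarith only [hn1] : (0:ℝ) ≤ (n:ℝ)-1)]
    gcongr
  have hfB : (n:ℝ)*Real.pi*sa/2 ≤ f := by
    have hub := abs_le.mp ht
    rw [hfdef]
    have hp3 : 0 ≤ (Real.pi - 3) * ((n:ℝ)*sa) :=
      mul_nonneg (by linarith only [hπ]) (mul_nonneg hn0.le hsa0.le)
    linarith only [hub.1, hnsa, hp3, hB0]
  have hx3 : 0 < (n:ℝ)*Real.pi*sa := mul_pos (mul_pos hn0 hπ0) hsa0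
  have hf0 : 0 < f := lt_of_lt_of_le (by linarith only [hx3]) hfB
  -- strictness
  have hstrict : K₃/((n:ℝ)*Real.pi)^2 < f^2 := by
    have hnx : (1:ℝ) ≤ (n:ℝ)*Real.pi := by
      linarith only [hn1, mul_nonneg (by linarith only [hπ] : (0:ℝ) ≤ Real.pi - 1) hn0.le]
    have hx2 : (1:ℝ) ≤ ((n:ℝ)*Real.pi)^2 := by
      nlinarith only [hnx, sq_nonneg ((n:ℝ)*Real.pi - 1)]
    have h1 : K₃/((n:ℝ)*Real.pi)^2 ≤ K₃ := by
      rw [div_le_iff₀ (by positivity)]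
      linarith only [mul_nonneg hK₃0.le (by linarith only [hx2] : (0:ℝ) ≤ ((n:ℝ)*Real.pi)^2 - 1)]
    have hsq : ((n:ℝ)*Real.pi*sa/2)^2 ≤ f^2 := pow_le_pow_left₀ (by linarith only [hx3]) hfB 2
    have e : ((n:ℝ)*Real.pi*sa/2)^2 = (n:ℝ)^2*Real.pi^2*a/4 := by
      linear_combination ((n:ℝ)^2*Real.pi^2/4) * hsa2
    have h9 : 0 ≤ (Real.pi^2 - 9) * ((n:ℝ)^2 * a) :=
      mul_nonneg (by nlinarith only [hπ] : (0:ℝ) ≤ Real.pi^2 - 9) (by positivity)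
    have h10 : 0 ≤ ((n:ℝ)-1) * ((n:ℝ)*a) :=
      mul_nonneg (by linarith only [hn1]) (by positivity)
    have h2 : K₃ < ((n:ℝ)*Real.pi*sa/2)^2 := by
      rw [e]; nlinarith only [h9, h10, hnKa, hK₃0]
    linarith only [h1, h2, hsq]
  have hclose := sqrt_close hf0 hE hstrict
  -- finish
  have h6 : |Real.sqrt g - f| * f * ((n:ℝ)*Real.pi)^2 ≤ K₃ := by
    have h5 := (le_div_iff₀ (show (0:ℝ) < ((n:ℝ)*Real.pi)^2 by positivity)).mp hclose
    linarith only [h5]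
  have h7 : |Real.sqrt g - f| * ((n:ℝ)*Real.pi*sa/2) * ((n:ℝ)*Real.pi)^2 ≤ K₃ :=
    le_trans (mul_le_mul_of_nonneg_right
      (mul_le_mul_of_nonneg_left hfB (abs_nonneg _)) (by positivity)) h6
  have hπ2 : (9:ℝ) ≤ Real.pi^2 := by nlinarith only [hπ]
  have hπ3 : (27:ℝ) ≤ Real.pi^3 := by nlinarith only [hπ2, hπ]
  simp only [Real.norm_eq_abs]
  rw [abs_inv, abs_pow, Nat.abs_cast]
  rw [show 2*K₃/sa * (((n:ℝ)^3)⁻¹) = (2*K₃)/(sa*(n:ℝ)^3) by ring]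
  rw [le_div_iff₀ (mul_pos hsa0 (by positivity : (0:ℝ) < (n:ℝ)^3))]
  have hpos : 0 ≤ |Real.sqrt g - f| * sa * (n:ℝ)^3 :=
    mul_nonneg (mul_nonneg (abs_nonneg _) hsa0.le) (by positivity)
  nlinarith only [h7, hpos,
    mul_nonneg (by linarith only [hπ3] : (0:ℝ) ≤ Real.pi^3 - 1) hpos]

/-- Asymptotic expansion of the eigenfrequencies in the different wave speed case. -/
theorem stmt_13 (ρ₁ ρ₂ k₁ k₂ : ℝ) (hρ₁ : 0 < ρ₁) (hρ₂ : 0 < ρ₂) (hk₁ : 0 < k₁) (hk₂ : 0 < k₂)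
    (hne : k₁ / ρ₁ ≠ k₂ / ρ₂) :
    (fun n : ℕ => mu1df ρ₁ ρ₂ k₁ k₂ n -
        ((n : ℝ) * Real.pi * Real.sqrt (k₁ / ρ₁)
          + (k₁ / ρ₂) * Real.sqrt (k₁ / ρ₁) / (2 * (k₁ / ρ₁ - k₂ / ρ₂) * Real.pi * (n : ℝ))))
      =O[atTop] (fun n : ℕ => (((n : ℝ)) ^ 3)⁻¹) ∧
    (fun n : ℕ => mu2df ρ₁ ρ₂ k₁ k₂ n -
        ((n : ℝ) * Real.pi * Real.sqrt (k₂ / ρ₂)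
          - (k₁ / ρ₂) * Real.sqrt (k₂ / ρ₂) / (2 * (k₁ / ρ₁ - k₂ / ρ₂) * Real.pi * (n : ℝ))))
      =O[atTop] (fun n : ℕ => (((n : ℝ)) ^ 3)⁻¹) := by
  have ha : 0 < k₁ / ρ₁ := by positivity
  have hb : 0 < k₂ / ρ₂ := by positivity
  have hc : 0 < k₁ / ρ₂ := by positivity
  constructor
  · have h1 := branch_asymp (k₁/ρ₁) (k₂/ρ₂) (k₁/ρ₂) ha hb hc hne
    simpa only [mu1df] using h1
  · have h2 := branch_asymp (k₂/ρ₂) (k₁/ρ₁) (k₁/ρ₂) hb ha hc (Ne.symm hne)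
    have heq : (fun n : ℕ => mu2df ρ₁ ρ₂ k₁ k₂ n -
        ((n : ℝ) * Real.pi * Real.sqrt (k₂ / ρ₂)
          - (k₁ / ρ₂) * Real.sqrt (k₂ / ρ₂) / (2 * (k₁ / ρ₁ - k₂ / ρ₂) * Real.pi * (n : ℝ))))
        = (fun n : ℕ => Real.sqrt (((k₂/ρ₂ + k₁/ρ₁) * ((n : ℝ) * Real.pi) ^ 2 + k₁/ρ₂) / 2
            + ((k₂/ρ₂ - k₁/ρ₁) / 2) * Real.sqrt (((n : ℝ) * Real.pi) ^ 4
              + (2 * (k₂/ρ₂ + k₁/ρ₁) * (k₁/ρ₂) * ((n : ℝ) * Real.pi) ^ 2 + (k₁/ρ₂) ^ 2)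
                / (k₂/ρ₂ - k₁/ρ₁) ^ 2))
          - ((n : ℝ) * Real.pi * Real.sqrt (k₂/ρ₂)
              + (k₁/ρ₂) * Real.sqrt (k₂/ρ₂) / (2 * (k₂/ρ₂ - k₁/ρ₁) * Real.pi * (n : ℝ)))) := by
      funext n
      simp only [mu2df]
      have hs : Real.sqrt (((n:ℝ)*Real.pi)^4
            + (2*(k₁/ρ₁+k₂/ρ₂)*(k₁/ρ₂)*((n:ℝ)*Real.pi)^2 + (k₁/ρ₂)^2)/(k₁/ρ₁-k₂/ρ₂)^2)
          = Real.sqrt (((n:ℝ)*Real.pi)^4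
            + (2*(k₂/ρ₂+k₁/ρ₁)*(k₁/ρ₂)*((n:ℝ)*Real.pi)^2 + (k₁/ρ₂)^2)/(k₂/ρ₂-k₁/ρ₁)^2) := by
        congr 1
        rw [show (k₁/ρ₁-k₂/ρ₂)^2 = (k₂/ρ₂-k₁/ρ₁)^2 by ring]
        ring
      rw [hs, show (2 * (k₂/ρ₂ - k₁/ρ₁) * Real.pi * (n:ℝ))
          = -(2 * (k₁/ρ₁ - k₂/ρ₂) * Real.pi * (n:ℝ)) by ring, div_neg]
      ring
    rw [heq]
    exact h2
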